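/- arXiv:1512.08148 — 7 statements merged into one kernel-verified Lean document; each statement's English description precedes it below -/
import Mathlib

section
/- Let 0 < ε ≤ 1 ≤ α ≤ a, 0 ≤ β ≤ b, Δ ≥ b. Define r_0 = Δ, s_i = a·r_i + b, w_i = α·s_i + β, and r_i = ((α+1+ε)·Σ_{0≤j≤i−1} w_j + β)/ε for i ≥ 1. Then for all i ≥ 0: r_i ≤ (3·4^{i−1}·a^{3i}·Δ + (9·4^{i−1} − 2)·a^{3i−1}·b)/ε^i and Σ_{0≤j≤i} w_j ≤ (4^i·a^{3i+2}·Δ + (3·4^i − 1)·a^{3i+1}·b)/ε^i. -/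
set_option maxHeartbeats 1600000 in
theorem stmt4 (ε α a β b Δ : ℝ)
    (hε0 : 0 < ε) (hε1 : ε ≤ 1) (hα : 1 ≤ α) (hαa : α ≤ a)
    (hβ : 0 ≤ β) (hβb : β ≤ b) (hbΔ : b ≤ Δ)
    (r s w : ℕ → ℝ)
    (hr0 : r 0 = Δ)
    (hs : ∀ i, s i = a * r i + b)
    (hw : ∀ i, w i = α * s i + β)
    (hr : ∀ i, 1 ≤ i → r i = ((α + 1 + ε) * ∑ j ∈ Finset.range i, w j + β) / ε) :
    (∀ i : ℕ, 1 ≤ i →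
      r i ≤ (3 * 4 ^ (i - 1) * a ^ (3 * i) * Δ + (9 * 4 ^ (i - 1) - 2) * a ^ (3 * i - 1) * b)
        / ε ^ i) ∧
    (∀ i : ℕ,
      ∑ j ∈ Finset.range (i + 1), w j ≤
        (4 ^ i * a ^ (3 * i + 2) * Δ + (3 * 4 ^ i - 1) * a ^ (3 * i + 1) * b) / ε ^ i) := by
  have ha : (1:ℝ) ≤ a := hα.trans hαa
  have ha0 : (0:ℝ) < a := lt_of_lt_of_le one_pos ha
  have hb0 : (0:ℝ) ≤ b := hβ.trans hβb
  have hΔ0 : (0:ℝ) ≤ Δ := hb0.trans hbΔ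
  have hα0 : (0:ℝ) ≤ α := le_trans zero_le_one hα
  -- nonnegativity of r
  have hrnn : ∀ i, 0 ≤ r i := by
    intro i
    induction i using Nat.strong_induction_on with
    | _ i ih =>
      match i with
      | 0 => rw [hr0]; exact hΔ0
      | Nat.succ n =>
        rw [hr (n+1) (by omega)]
        apply div_nonneg _ hε0.le
        have hsum : 0 ≤ ∑ j ∈ Finset.range (n+1), w j := by
          apply Finset.sum_nonneg
          intro j hj
          rw [hw j, hs j]
          have := ih j (Finset.mem_range.mp hj)
          positivity
        nlinarith [hsum, hβ, hα0, hε0.le]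
  have hwnn : ∀ i, 0 ≤ w i := by
    intro i
    rw [hw i, hs i]
    have := hrnn i
    positivity
  have hsumnn : ∀ i, 0 ≤ ∑ j ∈ Finset.range i, w j :=
    fun i => Finset.sum_nonneg fun j _ => hwnn j
  have hεp : ∀ i : ℕ, 0 < ε ^ i := fun i => pow_pos hε0 i
  have hεle1 : ∀ i : ℕ, ε ^ i ≤ 1 := fun i => pow_le_one₀ hε0.le hε1
  have hapow : ∀ i : ℕ, (1:ℝ) ≤ a ^ i := fun i => one_le_pow₀ ha
  have h4pow : ∀ i : ℕ, (1:ℝ) ≤ (4:ℝ) ^ i := fun i => one_le_pow₀ (by norm_num)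
  -- key step: from the multiplied-out sum bound at i, get the bound on r (i+1)
  have hQP : ∀ i : ℕ,
      ε ^ i * (∑ j ∈ Finset.range (i+1), w j) ≤
        4 ^ i * a ^ (3*i+2) * Δ + (3 * 4 ^ i - 1) * a ^ (3*i+1) * b →
      ε ^ (i+1) * r (i+1) ≤
        3 * 4 ^ i * a ^ (3*i+3) * Δ + (9 * 4 ^ i - 2) * a ^ (3*i+2) * b := by
    intro i hW
    have hεr : ε * r (i+1) = (α + 1 + ε) * (∑ j ∈ Finset.range (i+1), w j) + β := by
      rw [hr (i+1) (by omega)]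
      field_simp
    have hrw : ε ^ (i+1) * r (i+1) =
        (α + 1 + ε) * (ε ^ i * (∑ j ∈ Finset.range (i+1), w j)) + ε ^ i * β := by
      have : ε ^ (i+1) * r (i+1) = ε ^ i * (ε * r (i+1)) := by ring
      rw [this, hεr]; ring
    rw [hrw]
    rw [show a ^ (3*i+3) = a ^ (3*i+1) * (a*a) by ring,
        show a ^ (3*i+2) = a ^ (3*i+1) * a by ring]
    rw [show a ^ (3*i+2) = a ^ (3*i+1) * a by ring] at hW
    have h1 : α + 1 + ε ≤ 3 * a := by linarith
    have hEW0 : 0 ≤ ε ^ i * (∑ j ∈ Finset.range (i+1), w j) :=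
      mul_nonneg (hεp i).le (hsumnn (i+1))
    have step1 : (α + 1 + ε) * (ε ^ i * (∑ j ∈ Finset.range (i+1), w j)) ≤
        3 * a * (4 ^ i * (a ^ (3*i+1) * a) * Δ + (3 * 4 ^ i - 1) * a ^ (3*i+1) * b) := by
      calc (α + 1 + ε) * (ε ^ i * (∑ j ∈ Finset.range (i+1), w j))
          ≤ 3 * a * (ε ^ i * (∑ j ∈ Finset.range (i+1), w j)) :=
            mul_le_mul_of_nonneg_right h1 hEW0
        _ ≤ 3 * a * (4 ^ i * (a ^ (3*i+1) * a) * Δ + (3 * 4 ^ i - 1) * a ^ (3*i+1) * b) :=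
            mul_le_mul_of_nonneg_left hW (by linarith)
    have step2 : ε ^ i * β ≤ b :=
      le_trans (mul_le_of_le_one_left hβ (hεle1 i)) hβb
    have hAa1 : (1:ℝ) ≤ a ^ (3*i+1) * a := by nlinarith [hapow (3*i+1)]
    have hbump : b ≤ a ^ (3*i+1) * a * b := le_mul_of_one_le_left hb0 hAa1
    nlinarith [step1, step2, hbump]
  -- the sum bound, multiplied out, by induction
  have hQ : ∀ i : ℕ,
      ε ^ i * (∑ j ∈ Finset.range (i+1), w j) ≤
        4 ^ i * a ^ (3*i+2) * Δ + (3 * 4 ^ i - 1) * a ^ (3*i+1) * b := by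
    intro i
    induction i with
    | zero =>
      simp only [pow_zero, one_mul, Finset.sum_range_one, Nat.mul_zero, Nat.zero_add]
      rw [hw 0, hs 0, hr0]
      nlinarith [mul_nonneg (mul_nonneg (sub_nonneg.mpr hαa) ha0.le) hΔ0,
        mul_nonneg (sub_nonneg.mpr hαa) hb0,
        mul_nonneg (sub_nonneg.mpr ha) hb0]
    | succ i ih =>
      have hP := hQP i ih
      rw [show a ^ (3*i+3) = a ^ (3*i+1) * (a*a) by ring,
          show a ^ (3*i+2) = a ^ (3*i+1) * a by ring] at hP
      rw [show a ^ (3*i+2) = a ^ (3*i+1) * a by ring] at ih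
      rw [Finset.sum_range_succ w (i+1), hw (i+1), hs (i+1)]
      rw [show a ^ (3*(i+1)+2) = a ^ (3*i+1) * a ^ 4 by ring,
          show a ^ (3*(i+1)+1) = a ^ (3*i+1) * a ^ 3 by ring,
          show (4:ℝ) ^ (i+1) = 4 * 4 ^ i by ring]
      have hA : (1:ℝ) ≤ a ^ (3*i+1) := hapow (3*i+1)
      have hA0 : (0:ℝ) ≤ a ^ (3*i+1) := by positivity
      have hF : (1:ℝ) ≤ (4:ℝ) ^ i := h4pow i
      have hLHS : ε ^ (i+1) * ((∑ j ∈ Finset.range (i+1), w j) + (α * (a * r (i+1) + b) + β))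
          = ε * (ε ^ i * (∑ j ∈ Finset.range (i+1), w j))
            + α * a * (ε ^ (i+1) * r (i+1)) + ε ^ (i+1) * (α * b + β) := by ring
      rw [hLHS]
      have f0 : ε * (ε ^ i * (∑ j ∈ Finset.range (i+1), w j)) ≤
          ε ^ i * (∑ j ∈ Finset.range (i+1), w j) :=
        mul_le_of_le_one_left (mul_nonneg (hεp i).le (hsumnn (i+1))) hε1
      have f3 : α * a * (ε ^ (i+1) * r (i+1)) ≤
          a * a * (3 * 4 ^ i * (a ^ (3*i+1) * (a*a)) * Δ
            + (9 * 4 ^ i - 2) * (a ^ (3*i+1) * a) * b) := by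
        have hαa2 : α * a ≤ a * a := mul_le_mul_of_nonneg_right hαa ha0.le
        have hEr0 : 0 ≤ ε ^ (i+1) * r (i+1) := mul_nonneg (hεp (i+1)).le (hrnn (i+1))
        calc α * a * (ε ^ (i+1) * r (i+1)) ≤ a * a * (ε ^ (i+1) * r (i+1)) :=
              mul_le_mul_of_nonneg_right hαa2 hEr0
          _ ≤ _ := mul_le_mul_of_nonneg_left hP (by positivity)
      have f4 : ε ^ (i+1) * (α * b + β) ≤ a * b + b := by
        have h0 : 0 ≤ α * b + β := by positivity
        have h2 : ε ^ (i+1) * (α * b + β) ≤ α * b + β := mul_le_of_le_one_left h0 (hεle1 (i+1))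
        nlinarith [mul_le_mul_of_nonneg_right hαa hb0]
      -- monomial bumps
      have haa3 : a ≤ a ^ 3 := by nlinarith
      have haa4 : a ≤ a ^ 4 := by nlinarith
      have f5 : 4 ^ i * (a ^ (3*i+1) * a) * Δ ≤ 4 ^ i * (a ^ (3*i+1) * a ^ 4) * Δ := by
        have : a ^ (3*i+1) * a ≤ a ^ (3*i+1) * a ^ 4 := mul_le_mul_of_nonneg_left haa4 hA0
        have h4i : (0:ℝ) ≤ 4 ^ i := by positivity
        exact mul_le_mul_of_nonneg_right (mul_le_mul_of_nonneg_left this h4i) hΔ0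
      have hc : (0:ℝ) ≤ 3 * 4 ^ i - 1 := by linarith
      have f6 : (3 * 4 ^ i - 1) * a ^ (3*i+1) * b ≤
          (3 * 4 ^ i - 1) * (a ^ (3*i+1) * a ^ 3) * b := by
        have hA3 : a ^ (3*i+1) ≤ a ^ (3*i+1) * a ^ 3 :=
          le_mul_of_one_le_right hA0 (one_le_pow₀ ha)
        exact mul_le_mul_of_nonneg_right (mul_le_mul_of_nonneg_left hA3 hc) hb0
      have f7 : a * b + b ≤ 2 * (a ^ (3*i+1) * a ^ 3) * b := by
        have e0 : (1:ℝ) ≤ a ^ (3*i+1) * a ^ 3 := by nlinarith [hA, hapow 3]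
        have e1 : a ≤ a ^ (3*i+1) * a ^ 3 := by nlinarith
        have e2 : a * b ≤ (a ^ (3*i+1) * a ^ 3) * b := mul_le_mul_of_nonneg_right e1 hb0
        have e3 : b ≤ (a ^ (3*i+1) * a ^ 3) * b := le_mul_of_one_le_left hb0 e0
        linarith
      nlinarith [f0, ih, f3, f4, f5, f6, f7]
  refine ⟨?_, ?_⟩
  · intro i hi
    obtain ⟨k, rfl⟩ : ∃ k, i = k + 1 := ⟨i - 1, by omega⟩
    have hP := hQP k (hQ k)
    rw [show (k+1) - 1 = k from rfl, show 3*(k+1) = 3*k+3 by ring,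
      show 3*k+3 - 1 = 3*k+2 by omega]
    rw [le_div_iff₀ (hεp (k+1))]
    linarith [hP]
  · intro i
    rw [le_div_iff₀ (hεp i)]
    linarith [hQ i]
end

section
/- Under the assumptions 0 < ε ≤ 1 ≤ α ≤ a, 0 ≤ β ≤ b ≤ Δ, and (4a³/ε)^p ≤ n^{1/p} with p ≥ 2, define r_i, s_i, w_i as in the recurrences r_0 = Δ, s_i = a·r_i + b, w_i = α·s_i + β, r_i = ((α+1+ε)Σ_{j<i} w_j + β)/ε, and γ = (α+1+ε)Σ_{0≤j≤p−2} w_j + β + 2εΔ. Then a·γ + b ≤ ε·n^{1/p}·Δ. -/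
set_option maxHeartbeats 1000000 in
theorem stmt5 (p : ℕ) (hp : 2 ≤ p) (ε α a β b Δ n : ℝ)
    (hε0 : 0 < ε) (hε1 : ε ≤ 1) (hα : 1 ≤ α) (hαa : α ≤ a)
    (hβ : 0 ≤ β) (hβb : β ≤ b) (hbΔ : b ≤ Δ) (hn : 1 ≤ n)
    (hpow : (4 * a ^ 3 / ε) ^ p ≤ n ^ ((p : ℝ)⁻¹))
    (r s w : ℕ → ℝ)
    (hr0 : r 0 = Δ)
    (hs : ∀ i, s i = a * r i + b)
    (hw : ∀ i, w i = α * s i + β)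
    (hr : ∀ i, 1 ≤ i → r i = ((α + 1 + ε) * ∑ j ∈ Finset.range i, w j + β) / ε)
    (γ : ℝ)
    (hγ : γ = (α + 1 + ε) * ∑ j ∈ Finset.range (p - 1), w j + β + 2 * ε * Δ) :
    a * γ + b ≤ ε * n ^ ((p : ℝ)⁻¹) * Δ := by
  have ha : (1:ℝ) ≤ a := hα.trans hαa
  have ha0 : (0:ℝ) ≤ a := by linarith
  have hα0 : (0:ℝ) ≤ α := by linarith
  have hb0 : (0:ℝ) ≤ b := hβ.trans hβb
  have hΔ0 : 0 ≤ Δ := hb0.trans hbΔ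
  have ha2 : (1:ℝ) ≤ a ^ 2 := by nlinarith
  have ha3 : (1:ℝ) ≤ a ^ 3 := by nlinarith
  set M : ℝ := 4 * a ^ 3 / ε with hM
  have hM4 : 4 ≤ M := by
    rw [hM, le_div_iff₀ hε0]; nlinarith
  have hM1 : (1:ℝ) ≤ M := by linarith
  have hεM : ε * M = 4 * a ^ 3 := by
    rw [hM]; field_simp
  have hrm : ∀ i, 1 ≤ i →
      ε * r i = (α + 1 + ε) * ∑ j ∈ Finset.range i, w j + β := by
    intro i hi; rw [hr i hi]; field_simp
  have hrpos : ∀ i, 0 ≤ r i := by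
    intro i
    induction i using Nat.strong_induction_on with
    | _ i ih =>
      match i with
      | 0 => rw [hr0]; exact hΔ0
      | (k+1) =>
        rw [hr (k+1) (by omega)]
        apply div_nonneg _ hε0.le
        have hsum : 0 ≤ ∑ j ∈ Finset.range (k+1), w j := by
          apply Finset.sum_nonneg
          intro j hj
          have hrj := ih j (Finset.mem_range.mp hj)
          rw [hw j, hs j]
          nlinarith [mul_nonneg (mul_nonneg hα0 ha0) hrj, mul_nonneg hα0 hb0]
        nlinarith
  have hQ : ∀ i, 1 ≤ i → r i + 2 * Δ ≤ 3 * M ^ i * Δ := by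
    intro i hi
    induction i, hi using Nat.le_induction with
    | base =>
      have h1 := hrm 1 le_rfl
      rw [Finset.sum_range_one, hw 0, hs 0, hr0] at h1
      have key : ε * (r 1 + 2 * Δ) ≤ ε * (3 * M ^ 1 * Δ) := by
        have heq : ε * (3 * M ^ 1 * Δ) = 12 * a ^ 3 * Δ := by
          rw [pow_one]; linear_combination (3 * Δ) * hεM
        rw [heq]
        have hw0nn : 0 ≤ α * (a * Δ + b) + β := by
          nlinarith [mul_nonneg (mul_nonneg hα0 ha0) hΔ0, mul_nonneg hα0 hb0]
        have hw0le : α * (a * Δ + b) + β ≤ 3 * a ^ 2 * Δ := by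
          nlinarith [mul_nonneg (mul_nonneg (sub_nonneg.mpr hαa) ha0) hΔ0,
            mul_nonneg (sub_nonneg.mpr hαa) hb0,
            mul_nonneg ha0 (sub_nonneg.mpr hbΔ),
            mul_nonneg (mul_nonneg ha0 (sub_nonneg.mpr ha)) hΔ0,
            mul_nonneg (sub_nonneg.mpr ha2) hΔ0]
        have h6 : (α + 1 + ε) * (α * (a * Δ + b) + β) ≤ (3 * a) * (3 * a ^ 2 * Δ) :=
          mul_le_mul (by linarith) hw0le hw0nn (by linarith)
        linarith [h6, mul_nonneg (sub_nonneg.mpr hε1) hΔ0,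
          mul_nonneg (sub_nonneg.mpr ha3) hΔ0, hβb, hbΔ]
      exact le_of_mul_le_mul_left key hε0
    | succ i hi ih =>
      have hstep : ε * r (i+1) = ε * r i + (α + 1 + ε) * (α * (a * r i + b) + β) := by
        rw [hrm (i+1) (by omega), hrm i hi, Finset.sum_range_succ, hw i, hs i]; ring
      have hri := hrpos i
      have key : ε * (r (i+1) + 2 * Δ) ≤ ε * (M * (r i + 2 * Δ)) := by
        have h2 : ε * (M * (r i + 2 * Δ)) = 4 * a ^ 3 * (r i + 2 * Δ) := by
          linear_combination (r i + 2 * Δ) * hεM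
        rw [h2]
        have hwinn : 0 ≤ α * (a * r i + b) + β := by
          nlinarith [mul_nonneg (mul_nonneg hα0 ha0) hri, mul_nonneg hα0 hb0]
        have hwile : α * (a * r i + b) + β ≤ a ^ 2 * r i + 2 * a * Δ := by
          nlinarith [mul_nonneg (mul_nonneg (sub_nonneg.mpr hαa) ha0) hri,
            mul_nonneg (sub_nonneg.mpr hαa) hb0,
            mul_nonneg ha0 (sub_nonneg.mpr hbΔ),
            mul_nonneg (sub_nonneg.mpr ha) hΔ0]
        have h6 : (α + 1 + ε) * (α * (a * r i + b) + β) ≤ (3 * a) * (a ^ 2 * r i + 2 * a * Δ) :=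
          mul_le_mul (by linarith) hwile hwinn (by linarith)
        linarith [h6, hstep, mul_nonneg (sub_nonneg.mpr (hε1.trans ha3)) hri,
          mul_nonneg (mul_nonneg (mul_nonneg ha0 ha0) (sub_nonneg.mpr ha)) hΔ0,
          mul_nonneg (sub_nonneg.mpr (hε1.trans ha3)) hΔ0,
          mul_nonneg (sub_nonneg.mpr hε1) hΔ0]
      have h3 : r (i+1) + 2 * Δ ≤ M * (r i + 2 * Δ) := le_of_mul_le_mul_left key hε0
      calc r (i+1) + 2 * Δ ≤ M * (r i + 2 * Δ) := h3
        _ ≤ M * (3 * M ^ i * Δ) := mul_le_mul_of_nonneg_left ih (by linarith)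
        _ = 3 * M ^ (i+1) * Δ := by ring
  -- final step
  have hq1 : 1 ≤ p - 1 := by omega
  have hqp : p - 1 + 1 = p := by omega
  have hγ' : γ = ε * r (p-1) + 2 * ε * Δ := by
    have := hrm (p-1) hq1
    rw [hγ]; linarith
  have hQq := hQ (p-1) hq1
  have hMq : 4 ≤ M ^ (p-1) := le_trans (by linarith [pow_one M]) (pow_le_pow_right₀ hM1 hq1)
  have hMq0 : (0:ℝ) ≤ M ^ (p-1) := by positivity
  have hMp : M ^ (p-1) * M = M ^ p := by rw [← pow_succ, hqp]
  have hmain : a * γ + b ≤ ε * M ^ p * Δ := by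
    rw [hγ', ← hMp]
    have h4 : ε * (M ^ (p-1) * M) * Δ = 4 * a ^ 3 * M ^ (p-1) * Δ := by
      linear_combination (M ^ (p-1) * Δ) * hεM
    rw [h4]
    have hrq : r (p-1) ≤ 3 * M ^ (p-1) * Δ - 2 * Δ := by linarith
    have haε : 0 ≤ a * ε := by positivity
    have haε3 : 0 ≤ a ^ 3 - a * ε := by nlinarith
    linarith [mul_le_mul_of_nonneg_left hrq haε,
      mul_nonneg (mul_nonneg haε3 hMq0) hΔ0,
      mul_le_mul_of_nonneg_right hMq hΔ0,
      mul_nonneg (mul_nonneg (sub_nonneg.mpr ha3) hMq0) hΔ0,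
      mul_nonneg haε hΔ0, hbΔ]
  calc a * γ + b ≤ ε * M ^ p * Δ := hmain
    _ ≤ ε * n ^ ((p:ℝ)⁻¹) * Δ :=
        mul_le_mul_of_nonneg_right (mul_le_mul_of_nonneg_left hpow hε0.le) hΔ0
end

section
/- Let s(x,l) be a function non-decreasing in both arguments with s(x,1) = a·x + b where a ≥ α ≥ 1, b ≥ β ≥ 0, 0 < ε ≤ 1, and such that for all l ≥ 1, s(x, l+1) ≤ (a(α+1+ε)(α·s(x,l) + β) + β)/ε + b. Define r_i by r_0 = Δ, r_j = ((α+1+ε)Σ_{0≤j'≤j−1} w_{j'} + β)/ε with s_j = a·r_j + b and w_j = α·s_j + β. Then for all 0 ≤ i < j ≤ p−1, s(r_i, j−i) ≤ s(r_{j−1}, 1). -/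
theorem stmt7 (p : ℕ) (hp : 2 ≤ p) (a b α β ε Δ : ℝ)
    (hα : 1 ≤ α) (hαa : α ≤ a) (hβ : 0 ≤ β) (hβb : β ≤ b)
    (hε0 : 0 < ε) (hε1 : ε ≤ 1) (hΔ : b ≤ Δ)
    (r sq w : ℕ → ℝ)
    (hr0 : r 0 = Δ)
    (hsq : ∀ j, sq j = a * r j + b)
    (hw : ∀ j, w j = α * sq j + β)
    (hr : ∀ j, 1 ≤ j → r j = ((α + 1 + ε) * ∑ j' ∈ Finset.range j, w j' + β) / ε)
    (s : ℝ → ℕ → ℝ)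
    (hmono : ∀ (x y : ℝ) (l : ℕ), x ≤ y → s x l ≤ s y l)
    (hs1 : ∀ x : ℝ, s x 1 = a * x + b)
    (hsrec : ∀ (x : ℝ) (l : ℕ), 0 ≤ x → 1 ≤ l →
      s x (l + 1) ≤ (a * (α + 1 + ε) * (α * s x l + β) + β) / ε + b) :
    ∀ i j : ℕ, i < j → j ≤ p - 1 → s (r i) (j - i) ≤ s (r (j - 1)) 1 := by
  have ha1 : 1 ≤ a := le_trans hα hαa
  have hb0 : 0 ≤ b := le_trans hβ hβb
  have hαε : 0 ≤ α + 1 + ε := by linarith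
  have hrn : ∀ j, 0 ≤ r j := by
    intro j
    induction j using Nat.strong_induction_on with
    | _ j ih =>
      match j with
      | 0 => rw [hr0]; linarith
      | (k+1) =>
        rw [hr (k+1) (by omega)]
        apply div_nonneg _ hε0.le
        have hsum : 0 ≤ ∑ j' ∈ Finset.range (k+1), w j' := by
          apply Finset.sum_nonneg
          intro j' hj'
          rw [hw, hsq]
          have hx := ih j' (Finset.mem_range.mp hj')
          have h1 : 0 ≤ a * r j' := mul_nonneg (by linarith) hx
          have h2 : 0 ≤ α * (a * r j' + b) := mul_nonneg (by linarith) (by linarith)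
          linarith
        nlinarith
  have hwn : ∀ j, 0 ≤ w j := by
    intro j
    rw [hw, hsq]
    have hx := hrn j
    have h1 : 0 ≤ a * r j := mul_nonneg (by linarith) hx
    have h2 : 0 ≤ α * (a * r j + b) := mul_nonneg (by linarith) (by linarith)
    linarith
  have key : ∀ l, 1 ≤ l → ∀ i, s (r i) l ≤ s (r (i + l - 1)) 1 := by
    intro l
    induction l with
    | zero => omega
    | succ n ih =>
      intro _ i
      rcases Nat.eq_zero_or_pos n with hn | hn
      · subst hn; simp
      · have h2 := hsrec (r i) n (hrn i) hn
        have h3 := ih hn i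
        rw [hs1] at h3
        have hwb : α * s (r i) n + β ≤ w (i + n - 1) := by
          rw [hw, hsq]; nlinarith
        have hidx : i + (n + 1) - 1 = i + n := by omega
        rw [hidx, hs1]
        have hrin : r (i + n) =
            ((α + 1 + ε) * ∑ j' ∈ Finset.range (i + n), w j' + β) / ε :=
          hr (i + n) (by omega)
        have hsplit : ∑ j' ∈ Finset.range (i + n), w j' =
            (∑ j' ∈ Finset.range (i + n - 1), w j') + w (i + n - 1) := by
          have h : i + n = (i + n - 1) + 1 := by omega
          have h2 := Finset.sum_range_succ w (i + n - 1)
          rw [← h] at h2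
          exact h2
        have hsum0 : 0 ≤ ∑ j' ∈ Finset.range (i + n - 1), w j' :=
          Finset.sum_nonneg (fun j' _ => hwn j')
        have step1 : s (r i) (n + 1) ≤
            (a * (α + 1 + ε) * w (i + n - 1) + β) / ε + b := by
          refine le_trans h2 ?_
          gcongr
        refine le_trans step1 ?_
        rw [hrin, ← mul_div_assoc]
        gcongr ?_ / ε + b
        rw [hsplit]
        nlinarith [mul_nonneg (mul_nonneg (by linarith : (0:ℝ) ≤ a) hαε) hsum0,
          mul_nonneg (by linarith : (0:ℝ) ≤ a - 1) hβ]
  intro i j hij hjp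
  have h := key (j - i) (by omega) i
  rwa [show i + (j - i) - 1 = j - 1 from by omega] at h
end

section
/- Let ε, Δ > 0, p ≥ 1 an integer, φ = εΔ/(p+1), and for a node u ≠ s at distance d = dist_G(u,s) ≥ 0 and priority index 0 ≤ i ≤ p−1 with r_i ≥ 0, define h(u,i) = (p+1)·⌈max(d − r_i, 0)/Δ⌉ + p + 1 − i. Then h(u,i)·φ ≤ ε·d + 2εΔ. -/
theorem stmt10 (ε Δ d r : ℝ) (p i : ℕ)
    (hε : 0 < ε) (hΔ : 0 < Δ) (hd : 0 ≤ d) (hr : 0 ≤ r)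
    (hp : 1 ≤ p) (hi : i ≤ p - 1)
    (φ h : ℝ)
    (hφ : φ = ε * Δ / ((p : ℝ) + 1))
    (hh : h = ((p : ℝ) + 1) * ((⌈max (d - r) 0 / Δ⌉ : ℤ) : ℝ) + (p : ℝ) + 1 - (i : ℝ)) :
    h * φ ≤ ε * d + 2 * ε * Δ := by
  have hp1 : (0:ℝ) < (p:ℝ) + 1 := by positivity
  have hmax : max (d - r) 0 ≤ d := by
    apply max_le (by linarith) hd
  have hdiv : max (d - r) 0 / Δ ≤ d / Δ :=
    div_le_div_of_nonneg_right hmax hΔ.le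
  have hc : ((⌈max (d - r) 0 / Δ⌉ : ℤ) : ℝ) ≤ d / Δ + 1 :=
    le_trans (Int.ceil_lt_add_one _).le (by linarith)
  have hi0 : (0:ℝ) ≤ (i:ℝ) := Nat.cast_nonneg i
  have hhle : h ≤ ((p:ℝ) + 1) * (d / Δ + 2) := by
    rw [hh]; nlinarith
  have hφ0 : 0 ≤ φ := by rw [hφ]; positivity
  calc h * φ ≤ ((p:ℝ) + 1) * (d / Δ + 2) * φ := mul_le_mul_of_nonneg_right hhle hφ0
    _ = ε * d + 2 * ε * Δ := by
        rw [hφ]; field_simp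
end

section
/- Let Δ ≥ 1, p ≥ 1, and r_i, r_j ≥ Δ with the convention h(x, priority) = (p+1)·⌈max(dist(x,s) − r_priority, 0)/Δ⌉ + p + 1 − priority. Suppose dist_G(u,s) > r_i and x is a node with dist_G(x,s) ≤ dist_G(u,s) − r_i, where x has priority j with r_j ≥ Δ. Then h(x,j) + 2 ≤ h(u,i). -/
/-!
With `a = dist(u,s) - r_i > 0` and `b = dist(x,s) - r_j`, the hypotheses give `b ≤ a - Δ`, so the
ceiling level `⌈max b 0 / Δ⌉` of `x` is strictly below the level `⌈a / Δ⌉ ≥ 1` of `u`. One level is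
worth `p + 1` in `h`, which beats the priority offsets since `i + 1 ≤ p`.
-/

theorem Int.ceil_div_add_one_le_of_le_sub {Δ a b : ℝ} (hΔ : 0 < Δ) (hb : b ≤ a - Δ) :
    ⌈b / Δ⌉ + 1 ≤ ⌈a / Δ⌉ := by
  have hdiv : b / Δ ≤ a / Δ - (1 : ℤ) := by
    rw [Int.cast_one, le_sub_iff_add_le, div_add_one hΔ.ne', div_le_div_iff_of_pos_right hΔ]
    linarith
  simpa [Int.ceil_sub_intCast, le_sub_iff_add_le] using Int.ceil_mono hdiv

theorem Int.ceil_max_zero_div_add_one_le {Δ a b : ℝ} (hΔ : 0 < Δ) (ha : 0 < a)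
    (hb : b ≤ a - Δ) : ⌈max b 0 / Δ⌉ + 1 ≤ ⌈a / Δ⌉ := by
  rcases le_total b 0 with hb0 | hb0
  · rw [max_eq_right hb0, zero_div, Int.ceil_zero, zero_add, Int.one_le_ceil_iff]
    exact div_pos ha hΔ
  · rw [max_eq_left hb0]
    exact Int.ceil_div_add_one_le_of_le_sub hΔ hb

theorem stmt11_general (Δ ri rj du dx : ℝ) (p i j : ℕ)
    (hΔ : 1 ≤ Δ) (hrj : Δ ≤ rj)
    (hp : 1 ≤ p) (hi : i ≤ p - 1)
    (hdu_gt : ri < du) (hdx_le : dx ≤ du - ri)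
    (hu hx : ℝ)
    (hhu : hu = ((p : ℝ) + 1) * ((⌈max (du - ri) 0 / Δ⌉ : ℤ) : ℝ) + (p : ℝ) + 1 - (i : ℝ))
    (hhx : hx = ((p : ℝ) + 1) * ((⌈max (dx - rj) 0 / Δ⌉ : ℤ) : ℝ) + (p : ℝ) + 1 - (j : ℝ)) :
    hx + 2 ≤ hu := by
  have hu_pos : 0 < du - ri := sub_pos.mpr hdu_gt
  have level_lt : ⌈max (dx - rj) 0 / Δ⌉ + 1 ≤ ⌈max (du - ri) 0 / Δ⌉ := by
    rw [max_eq_left hu_pos.le]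
    exact Int.ceil_max_zero_div_add_one_le (by linarith) hu_pos (by linarith)
  have level_lt' : ((⌈max (dx - rj) 0 / Δ⌉ : ℤ) : ℝ) + 1 ≤ ⌈max (du - ri) 0 / Δ⌉ := by
    exact_mod_cast level_lt
  have priority_le : (i : ℝ) + 1 ≤ p := by exact_mod_cast (by omega : i + 1 ≤ p)
  have := mul_le_mul_of_nonneg_left level_lt' (by positivity : (0 : ℝ) ≤ p + 1)
  subst hhu hhx
  linarith [(j.cast_nonneg : (0 : ℝ) ≤ j)]

theorem stmt11 (Δ ri rj du dx : ℝ) (p i j : ℕ)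
    (hΔ : 1 ≤ Δ) (hri : Δ ≤ ri) (hrj : Δ ≤ rj)
    (hp : 1 ≤ p) (hi : i ≤ p - 1) (hj : j ≤ p - 1)
    (hdu : 0 ≤ du) (hdx : 0 ≤ dx)
    (hdu_gt : ri < du) (hdx_le : dx ≤ du - ri)
    (hu hx : ℝ)
    (hhu : hu = ((p : ℝ) + 1) * ((⌈max (du - ri) 0 / Δ⌉ : ℤ) : ℝ) + (p : ℝ) + 1 - (i : ℝ))
    (hhx : hx = ((p : ℝ) + 1) * ((⌈max (dx - rj) 0 / Δ⌉ : ℤ) : ℝ) + (p : ℝ) + 1 - (j : ℝ)) :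
    hx + 2 ≤ hu :=
  stmt11_general Δ ri rj du dx p i j hΔ hrj hp hi hdu_gt hdx_le hu hx hhu hhx
end

section
/- Let Δ ≥ 1, p ≥ 1 and suppose j' ≥ i + 1 with 0 ≤ i, j' ≤ p−1, and r_i + s_{j'−1} ≤ r_{j'} where the reals satisfy Δ ≤ r_i and s_{j'−1} ≥ 0. Suppose d_{v'} ≤ d_u + s_{j'−1} for nonnegative reals d_u, d_{v'}. Then with h(u,i) = (p+1)·⌈max(d_u − r_i, 0)/Δ⌉ + p + 1 − i and h(v',j') = (p+1)·⌈max(d_{v'} − r_{j'}, 0)/Δ⌉ + p + 1 − j', it holds that h(v',j') + 1 ≤ h(u,i). -/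
theorem stmt12 (Δ ri rj' s' du dv' : ℝ) (p i j' : ℕ)
    (hΔ : 1 ≤ Δ) (hri : Δ ≤ ri) (hs' : 0 ≤ s')
    (hsum : ri + s' ≤ rj')
    (hdu : 0 ≤ du) (hdv' : 0 ≤ dv') (hdle : dv' ≤ du + s')
    (hp : 1 ≤ p) (hij : i < j') (hj' : j' ≤ p - 1)
    (hu hv' : ℝ)
    (hhu : hu = ((p : ℝ) + 1) * ((⌈max (du - ri) 0 / Δ⌉ : ℤ) : ℝ) + (p : ℝ) + 1 - (i : ℝ))
    (hhv' : hv' = ((p : ℝ) + 1) * ((⌈max (dv' - rj') 0 / Δ⌉ : ℤ) : ℝ) + (p : ℝ) + 1 - (j' : ℝ)) :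
    hv' + 1 ≤ hu := by
  have hΔ0 : (0:ℝ) < Δ := lt_of_lt_of_le one_pos hΔ
  have h1 : max (dv' - rj') 0 ≤ max (du - ri) 0 := max_le_max (by linarith) le_rfl
  have hc : (⌈max (dv' - rj') 0 / Δ⌉ : ℤ) ≤ ⌈max (du - ri) 0 / Δ⌉ :=
    Int.ceil_le_ceil (by gcongr)
  have hc' : ((⌈max (dv' - rj') 0 / Δ⌉ : ℤ) : ℝ) ≤ ((⌈max (du - ri) 0 / Δ⌉ : ℤ) : ℝ) := by
    exact_mod_cast hc
  have hij' : (i : ℝ) + 1 ≤ (j' : ℝ) := by exact_mod_cast hij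
  have hpn : (0:ℝ) ≤ (p : ℝ) + 1 := by positivity
  subst hhu hhv'
  nlinarith [mul_nonneg hpn (sub_nonneg.2 hc')]
end

section
/- Suppose a distance estimate δ satisfies x ≤ δ(x) ≤ α·x + β for all x ≤ D (α ≥ 1, β ≥ 0), and define r = min(((1+ε)^{⌊log_{1+ε}(δ(d_A) − 1)⌋} − β)/α, D) where d_A ≥ 1 is the distance to the nearest high-priority node and δ(d_A) ≥ d_A. If a node v satisfies a·d(u,v) + b ≤ d_A where a = (1+ε)α and b = (1+ε)β + 1, and d(u,v) ≤ D, then d(u,v) ≤ r. -/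
theorem stmt17 (α β ε D : ℝ) (hα : 1 ≤ α) (hβ : 0 ≤ β) (hε0 : 0 < ε) (hε1 : ε ≤ 1)
    (hD : 1 ≤ D) (d dA : ℕ) (hd : 1 ≤ d) (hdA : 1 ≤ dA) (hdD : (d : ℝ) ≤ D)
    (δ : ℝ) (hδ : (dA : ℝ) ≤ δ) (hδ1 : 1 < δ)
    (a b r : ℝ) (ha : a = (1 + ε) * α) (hb : b = (1 + ε) * β + 1)
    (hr : r = min (((1 + ε) ^ ⌊Real.logb (1 + ε) (δ - 1)⌋ - β) / α) D)
    (hab : a * (d : ℝ) + b ≤ (dA : ℝ)) :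
    (d : ℝ) ≤ r := by
  have h1 : (1 : ℝ) < 1 + ε := by linarith
  have hα0 : (0 : ℝ) < α := by linarith
  have hδ0 : (0 : ℝ) < δ - 1 := by linarith
  set x := Real.logb (1 + ε) (δ - 1) with hx
  have hkey : (1 + ε) * (α * d + β) ≤ δ - 1 := by
    nlinarith [hδ]
  have hquot : α * (d : ℝ) + β ≤ (δ - 1) / (1 + ε) := by
    rw [le_div_iff₀ (by linarith)]
    linarith [hkey]
  have hpow : (δ - 1) / (1 + ε) ≤ (1 + ε) ^ ⌊x⌋ := by
    have hfl : x - 1 ≤ (⌊x⌋ : ℝ) := by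
      linarith [Int.sub_one_lt_floor x, Int.floor_le x]
    have h2 : (1 + ε) ^ ((x : ℝ) - 1) ≤ (1 + ε) ^ ((⌊x⌋ : ℝ)) :=
      Real.rpow_le_rpow_of_exponent_le (le_of_lt h1) hfl
    have h3 : (1 + ε) ^ ((x : ℝ) - 1) = (δ - 1) / (1 + ε) := by
      rw [Real.rpow_sub (by linarith), Real.rpow_one, hx,
        Real.rpow_logb (by linarith) (by linarith) hδ0]
    rw [← Real.rpow_intCast]
    rw [h3] at h2
    exact h2
  rw [hr]
  refine le_min ?_ hdD
  rw [le_div_iff₀ hα0]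
  have : α * (d : ℝ) + β ≤ (1 + ε) ^ ⌊x⌋ := le_trans hquot hpow
  linarith
end
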